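/- arXiv:1203.5587 — 6 statements merged into one kernel-verified Lean document; each statement's English description precedes it below -/
import Mathlib

section
/- (Kuhn–Tucker sufficiency.) Let n ≥ 1, let B be a symmetric positive semidefinite n×n real matrix, b₁ ∈ ℝⁿ, β₀ ∈ ℝ, let ŷ(x) = β₀ + b₁ᵀx + xᵀBx, and let c > 0 with 𝔛 = {x ∈ ℝⁿ : ‖x‖² ≤ c²}. Suppose x* ∈ ℝⁿ and λ ∈ ℝ satisfy the Kuhn–Tucker first-order conditions: b₁ + 2(B + λI)x* = 0, ‖x*‖² − c² ≤ 0, λ(‖x*‖² − c²) = 0, and λ ≥ 0. Then x* is a global minimum of ŷ over 𝔛, i.e. ŷ(x*) ≤ ŷ(x) for all x ∈ 𝔛. -/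
/-!
With `M = B + λ I`, stationarity `b₁ = -2 M x*` turns the difference of objective values into
`ŷ(x) - ŷ(x*) = (x - x*)ᵀ M (x - x*) + λ (‖x*‖² - ‖x‖²)`.
The first term is nonnegative because `M` is positive semidefinite, and by complementary slackness
the second one equals `λ (c² - ‖x‖²) ≥ 0` on the ball.
-/

open scoped RealInnerProductSpace
open Matrix

namespace LinearMap.IsSymmetric

variable {E : Type*} [NormedAddCommGroup E] [InnerProductSpace ℝ E] {T : E →ₗ[ℝ] E}

theorem inner_map_self_sub_inner_map_self (hT : T.IsSymmetric) (x y : E) :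
    ⟪x, T x⟫ - ⟪y, T y⟫ = ⟪x - y, T (x - y)⟫ + 2 * ⟪x - y, T y⟫ := by
  have hxy : ⟪y, T x⟫ = ⟪x, T y⟫ := by rw [← hT, real_inner_comm]
  simp only [map_sub, inner_sub_left, inner_sub_right, hxy]
  ring

theorem quadratic_sub_of_stationary (hT : T.IsSymmetric) {b x₀ : E} {lam : ℝ}
    (hstat : b + (2 : ℝ) • (T x₀ + lam • x₀) = 0) (x : E) :
    (⟪b, x⟫ + ⟪x, T x⟫) - (⟪b, x₀⟫ + ⟪x₀, T x₀⟫) =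
      ⟪x - x₀, T (x - x₀)⟫ + lam * ‖x - x₀‖ ^ 2 + lam * (‖x₀‖ ^ 2 - ‖x‖ ^ 2) := by
  have hb : b = -((2 : ℝ) • (T x₀ + lam • x₀)) := eq_neg_of_add_eq_zero_left hstat
  have hquad := hT.inner_map_self_sub_inner_map_self x x₀
  rw [hb, ← real_inner_self_eq_norm_sq, ← real_inner_self_eq_norm_sq,
    ← real_inner_self_eq_norm_sq]
  simp only [inner_neg_left, inner_smul_left, inner_add_left, inner_sub_left, inner_sub_right,
    real_inner_comm x₀ x, real_inner_comm (T x₀) x, real_inner_comm (T x₀) x₀,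
    conj_trivial] at hquad ⊢
  linear_combination hquad

theorem isMinOn_of_kuhnTucker (hT : T.IsSymmetric) (hpos : ∀ x, 0 ≤ ⟪x, T x⟫) {b x₀ : E}
    {lam c : ℝ} (hstat : b + (2 : ℝ) • (T x₀ + lam • x₀) = 0)
    (hslack : lam * (‖x₀‖ ^ 2 - c ^ 2) = 0) (hlam : 0 ≤ lam) :
    IsMinOn (fun x ↦ ⟪b, x⟫ + ⟪x, T x⟫) {x | ‖x‖ ^ 2 ≤ c ^ 2} x₀ := by
  refine isMinOn_iff.2 fun x (hx : ‖x‖ ^ 2 ≤ c ^ 2) ↦ ?_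
  have hdiff := hT.quadratic_sub_of_stationary hstat x
  have hball : 0 ≤ lam * (c ^ 2 - ‖x‖ ^ 2) := mul_nonneg hlam (sub_nonneg.2 hx)
  have hdist : 0 ≤ lam * ‖x - x₀‖ ^ 2 := by positivity
  nlinarith [hpos (x - x₀)]

end LinearMap.IsSymmetric

theorem Matrix.toEuclideanLin_add_smul_one_apply {ι : Type*} [Fintype ι] [DecidableEq ι]
    (A : Matrix ι ι ℝ) (lam : ℝ) (x : EuclideanSpace ℝ ι) :
    (WithLp.equiv 2 (ι → ℝ)).symm ((A + lam • (1 : Matrix ι ι ℝ)) *ᵥ x) =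
      toEuclideanLin A x + lam • x := by
  ext i
  simp [add_mulVec, smul_mulVec]

theorem kuhnTucker_sufficiency_general (n : ℕ)
    (B : Matrix (Fin n) (Fin n) ℝ) (hB : B.IsSymm)
    (hBpsd : ∀ x : EuclideanSpace ℝ (Fin n),
      0 ≤ ⟪x, (WithLp.toLp 2 (B.mulVec x) : EuclideanSpace ℝ (Fin n))⟫)
    (b₁ : EuclideanSpace ℝ (Fin n)) (β₀ : ℝ) (c : ℝ)
    (xstar : EuclideanSpace ℝ (Fin n)) (lam : ℝ)
    (hkt1 : b₁ + (2 : ℝ) • (WithLp.equiv 2 (Fin n → ℝ)).symm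
        ((B + lam • (1 : Matrix (Fin n) (Fin n) ℝ)).mulVec xstar) = 0)
    (hkt3 : lam * (‖xstar‖ ^ 2 - c ^ 2) = 0)
    (hkt4 : 0 ≤ lam) :
    ∀ x ∈ {x : EuclideanSpace ℝ (Fin n) | ‖x‖ ^ 2 ≤ c ^ 2},
      β₀ + ⟪b₁, xstar⟫ + ⟪xstar, (WithLp.toLp 2 (B.mulVec xstar) : EuclideanSpace ℝ (Fin n))⟫ ≤
      β₀ + ⟪b₁, x⟫ + ⟪x, (WithLp.toLp 2 (B.mulVec x) : EuclideanSpace ℝ (Fin n))⟫ := by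
  have hT : (toEuclideanLin B).IsSymmetric :=
    isSymmetric_toEuclideanLin_iff.2 (isHermitian_iff_isSymm.2 hB)
  rw [toEuclideanLin_add_smul_one_apply] at hkt1
  intro x hx
  rw [add_assoc, add_assoc]
  exact (add_le_add_iff_left β₀).2
    (isMinOn_iff.1 (hT.isMinOn_of_kuhnTucker hBpsd hkt1 hkt3 hkt4) x hx)

/-- Kuhn–Tucker sufficiency: if `(x*, λ)` satisfies the Kuhn–Tucker first-order
conditions for the program `min ŷ(x)` subject to `‖x‖² ≤ c²`, with `B` symmetric positive
semidefinite, then `x*` is a global minimum of `ŷ` over `𝔛`. -/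
theorem kuhnTucker_sufficiency (n : ℕ) (hn : 1 ≤ n)
    (B : Matrix (Fin n) (Fin n) ℝ) (hB : B.IsSymm)
    (hBpsd : ∀ x : EuclideanSpace ℝ (Fin n),
      0 ≤ ⟪x, (WithLp.toLp 2 (B.mulVec x) : EuclideanSpace ℝ (Fin n))⟫)
    (b₁ : EuclideanSpace ℝ (Fin n)) (β₀ : ℝ) (c : ℝ) (hc : 0 < c)
    (xstar : EuclideanSpace ℝ (Fin n)) (lam : ℝ)
    (hkt1 : b₁ + (2 : ℝ) • (WithLp.equiv 2 (Fin n → ℝ)).symm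
        ((B + lam • (1 : Matrix (Fin n) (Fin n) ℝ)).mulVec xstar) = 0)
    (hkt2 : ‖xstar‖ ^ 2 - c ^ 2 ≤ 0)
    (hkt3 : lam * (‖xstar‖ ^ 2 - c ^ 2) = 0)
    (hkt4 : 0 ≤ lam) :
    ∀ x ∈ {x : EuclideanSpace ℝ (Fin n) | ‖x‖ ^ 2 ≤ c ^ 2},
      β₀ + ⟪b₁, xstar⟫ + ⟪xstar, (WithLp.toLp 2 (B.mulVec xstar) : EuclideanSpace ℝ (Fin n))⟫ ≤
      β₀ + ⟪b₁, x⟫ + ⟪x, (WithLp.toLp 2 (B.mulVec x) : EuclideanSpace ℝ (Fin n))⟫ :=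
  kuhnTucker_sufficiency_general n B hB hBpsd b₁ β₀ c xstar lam hkt1 hkt3 hkt4
end

section
/- (Kuhn–Tucker necessity.) Let n ≥ 1, let B be a symmetric positive semidefinite n×n real matrix, b₁ ∈ ℝⁿ, β₀ ∈ ℝ, let ŷ(x) = β₀ + b₁ᵀx + xᵀBx, and let c > 0 with 𝔛 = {x ∈ ℝⁿ : ‖x‖² ≤ c²}. If x* ∈ 𝔛 satisfies ŷ(x*) ≤ ŷ(x) for all x ∈ 𝔛, then there exists a Lagrange multiplier λ ≥ 0 such that b₁ + 2(B + λI)x* = 0 and λ(‖x*‖² − c²) = 0. -/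
open scoped RealInnerProductSpace
open Matrix Metric

/-!
The gradient `g = b₁ + 2 B x*` of `ŷ` at the minimiser satisfies the variational inequality
`⟪g, x - x*⟫ ≥ 0` on the ball. Testing it at `x = -(c / ‖g‖) g` gives
`c ‖g‖ ≤ -⟪g, x*⟫ ≤ ‖g‖ ‖x*‖`, so either `g = 0`, or `‖x*‖ = c` and Cauchy–Schwarz is an equality,
i.e. `c g = -‖g‖ x*`. In both cases `λ = ‖g‖ / (2 c)` is a multiplier.
-/

section InnerProductSpace

variable {E : Type*} [NormedAddCommGroup E] [InnerProductSpace ℝ E]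

theorem IsMinOn.inner_sub_nonneg {f : E → ℝ} {s : Set E} {a g x : E}
    (hmin : IsMinOn f s a) (hf : HasFDerivAt f (innerSL ℝ g) a) (hs : Convex ℝ s)
    (ha : a ∈ s) (hx : x ∈ s) : 0 ≤ ⟪g, x - a⟫ :=
  hmin.localize.hasFDerivWithinAt_nonneg hf.hasFDerivWithinAt
    (sub_mem_posTangentConeAt_of_segment_subset (hs.segment_subset ha hx))

theorem mul_norm_le_neg_inner_of_forall_mem_closedBall {g a : E} {r : ℝ} (hr : 0 ≤ r)
    (h : ∀ x ∈ closedBall (0 : E) r, 0 ≤ ⟪g, x - a⟫) : r * ‖g‖ ≤ -⟪g, a⟫ := by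
  rcases eq_or_ne g 0 with rfl | hg
  · simp
  have hg' : 0 < ‖g‖ := norm_pos_iff.mpr hg
  have hmem : -(r / ‖g‖) • g ∈ closedBall (0 : E) r := by
    rw [mem_closedBall_zero_iff, norm_smul, norm_neg, Real.norm_of_nonneg (by positivity),
      div_mul_cancel₀ _ hg'.ne']
  have htest := h _ hmem
  rw [inner_sub_right, real_inner_smul_right, real_inner_self_eq_norm_sq] at htest
  field_simp at htest
  linarith

/-- Equality in Cauchy–Schwarz forces `g` to be a nonpositive multiple of `a`. -/
theorem norm_mul_sub_eq_zero_and_smul_add_smul_eq_zero {g a : E} {r : ℝ} (ha : ‖a‖ ≤ r)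
    (h : r * ‖g‖ ≤ -⟪g, a⟫) : ‖g‖ * (‖a‖ - r) = 0 ∧ r • g + ‖g‖ • a = 0 := by
  have hcs : -⟪g, a⟫ ≤ ‖g‖ * ‖a‖ := by
    simpa [inner_neg_left] using real_inner_le_norm (-g) a
  have hslack : ‖g‖ * (‖a‖ - r) = 0 := by nlinarith [norm_nonneg g]
  refine ⟨hslack, ?_⟩
  rcases eq_or_ne g 0 with rfl | hg
  · simp
  have har : ‖a‖ = r := by
    simpa [sub_eq_zero, norm_ne_zero_iff.mpr hg] using hslack
  have heq : ⟪-g, a⟫ = ‖-g‖ * ‖a‖ := by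
    rw [inner_neg_left, norm_neg]; linarith
  have hparallel := inner_eq_norm_mul_iff_real.mp heq
  rw [har, norm_neg, smul_neg] at hparallel
  rw [← hparallel, add_neg_cancel]

end InnerProductSpace

theorem kuhnTucker_necessity_general (n : ℕ)
    (B : Matrix (Fin n) (Fin n) ℝ) (hB : B.IsSymm)
    (b₁ : EuclideanSpace ℝ (Fin n)) (β₀ : ℝ) (c : ℝ) (hc : 0 < c)
    (xstar : EuclideanSpace ℝ (Fin n))
    (hxstar : ‖xstar‖ ^ 2 ≤ c ^ 2)
    (hmin : ∀ x ∈ {x : EuclideanSpace ℝ (Fin n) | ‖x‖ ^ 2 ≤ c ^ 2},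
      β₀ + ⟪b₁, xstar⟫ + ⟪xstar, (WithLp.toLp 2 (B.mulVec xstar) : EuclideanSpace ℝ (Fin n))⟫ ≤
      β₀ + ⟪b₁, x⟫ + ⟪x, (WithLp.toLp 2 (B.mulVec x) : EuclideanSpace ℝ (Fin n))⟫) :
    ∃ lam : ℝ, 0 ≤ lam ∧
      b₁ + (2 : ℝ) • (WithLp.equiv 2 (Fin n → ℝ)).symm
          ((B + lam • (1 : Matrix (Fin n) (Fin n) ℝ)).mulVec xstar) = 0 ∧
      lam * (‖xstar‖ ^ 2 - c ^ 2) = 0 := by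
  set T := toEuclideanCLM (𝕜 := ℝ) B
  have hT : (T : EuclideanSpace ℝ (Fin n) →ₗ[ℝ] _).IsSymmetric :=
    isSymmetric_toEuclideanLin_iff.mpr (isHermitian_iff_isSymm.mpr hB)
  set g := b₁ + (2 : ℝ) • T xstar
  set f := fun x => β₀ + ⟪b₁, x⟫ + T.reApplyInnerSelf x
  have hf : HasFDerivAt f (innerSL ℝ g) xstar := by
    refine (((hasFDerivAt_const β₀ xstar).add (innerSL ℝ b₁).hasFDerivAt).add
      (hT.hasStrictFDerivAt_reApplyInnerSelf xstar).hasFDerivAt).congr_fderiv ?_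
    ext v
    simp [g]
  have hTx : ∀ x, T x = WithLp.toLp 2 (B *ᵥ WithLp.ofLp x) := fun _ => rfl
  have hball : ∀ x : EuclideanSpace ℝ (Fin n), x ∈ closedBall 0 c ↔ ‖x‖ ^ 2 ≤ c ^ 2 := fun x => by
    rw [mem_closedBall_zero_iff, sq_le_sq₀ (norm_nonneg x) hc.le]
  have hfmin : IsMinOn f (closedBall 0 c) xstar := fun x hx => by
    simpa [f, T.reApplyInnerSelf_apply, real_inner_comm, hTx] using hmin x ((hball x).mp hx)
  have hxstar' : xstar ∈ closedBall 0 c := (hball xstar).mpr hxstar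
  have hvar : ∀ x ∈ closedBall 0 c, 0 ≤ ⟪g, x - xstar⟫ := fun x hx =>
    hfmin.inner_sub_nonneg hf (convex_closedBall 0 c) hxstar' hx
  obtain ⟨hslack, hstat⟩ := norm_mul_sub_eq_zero_and_smul_add_smul_eq_zero
    (mem_closedBall_zero_iff.mp hxstar') (mul_norm_le_neg_inner_of_forall_mem_closedBall hc.le hvar)
  refine ⟨‖g‖ / (2 * c), by positivity, ?_, ?_⟩
  · have hmulVec : (WithLp.equiv 2 (Fin n → ℝ)).symm
        ((B + (‖g‖ / (2 * c)) • (1 : Matrix (Fin n) (Fin n) ℝ)).mulVec xstar) =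
        T xstar + (‖g‖ / (2 * c)) • xstar := by
      simp [add_mulVec, smul_mulVec, hTx]
    rw [hmulVec]
    linear_combination (norm := match_scalars <;> field_simp <;> ring) c⁻¹ • hstat
  · linear_combination hslack * (‖xstar‖ + c) / (2 * c)

/-- Kuhn–Tucker necessity: if `x*` is a global minimum of `ŷ` over
`𝔛 = {x : ‖x‖² ≤ c²}`, with `B` symmetric positive semidefinite, then there is a Lagrange
multiplier `λ ≥ 0` with `b₁ + 2(B + λI)x* = 0` and `λ(‖x*‖² − c²) = 0`. -/
theorem kuhnTucker_necessity (n : ℕ) (hn : 1 ≤ n)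
    (B : Matrix (Fin n) (Fin n) ℝ) (hB : B.IsSymm)
    (hBpsd : ∀ x : EuclideanSpace ℝ (Fin n),
      0 ≤ ⟪x, (WithLp.toLp 2 (B.mulVec x) : EuclideanSpace ℝ (Fin n))⟫)
    (b₁ : EuclideanSpace ℝ (Fin n)) (β₀ : ℝ) (c : ℝ) (hc : 0 < c)
    (xstar : EuclideanSpace ℝ (Fin n))
    (hxstar : ‖xstar‖ ^ 2 ≤ c ^ 2)
    (hmin : ∀ x ∈ {x : EuclideanSpace ℝ (Fin n) | ‖x‖ ^ 2 ≤ c ^ 2},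
      β₀ + ⟪b₁, xstar⟫ + ⟪xstar, (WithLp.toLp 2 (B.mulVec xstar) : EuclideanSpace ℝ (Fin n))⟫ ≤
      β₀ + ⟪b₁, x⟫ + ⟪x, (WithLp.toLp 2 (B.mulVec x) : EuclideanSpace ℝ (Fin n))⟫) :
    ∃ lam : ℝ, 0 ≤ lam ∧
      b₁ + (2 : ℝ) • (WithLp.equiv 2 (Fin n → ℝ)).symm
          ((B + lam • (1 : Matrix (Fin n) (Fin n) ℝ)).mulVec xstar) = 0 ∧
      lam * (‖xstar‖ ^ 2 - c ^ 2) = 0 :=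
  kuhnTucker_necessity_general n B hB b₁ β₀ c hc xstar hxstar hmin
end

section
/- (Boundary case and strict complementary slackness.) Let n ≥ 1, let B be a symmetric positive definite n×n real matrix, b₁ ∈ ℝⁿ, β₀ ∈ ℝ, let ŷ(x) = β₀ + b₁ᵀx + xᵀBx, and let c > 0 with 𝔛 = {x ∈ ℝⁿ : ‖x‖² ≤ c²}. If ‖(1/2) B⁻¹ b₁‖ > c and x* ∈ 𝔛 is the global minimizer of ŷ over 𝔛, then x* lies on the boundary, ‖x*‖² = c², and every Lagrange multiplier λ ≥ 0 satisfying b₁ + 2(B + λI)x* = 0 is strictly positive: λ > 0. -/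
/-!
If the minimizer `x*` were interior, it would be a local minimum of `ŷ`, so the gradient
`b₁ + 2Bx*` would vanish and `x* = -½B⁻¹b₁`, whose norm exceeds `c`. A multiplier `λ = 0` would
impose exactly the same stationarity equation, hence `λ > 0`.
-/

open scoped RealInnerProductSpace
open Matrix

section QuadraticObjective

variable {E : Type*} [NormedAddCommGroup E] [InnerProductSpace ℝ E]

theorem quadratic_sub_smul {T : E →ₗ[ℝ] E} (hT : T.IsSymmetric) (a : ℝ) (b x w : E) (t : ℝ) :
    a + ⟪b, x - t • w⟫ + ⟪x - t • w, T (x - t • w)⟫ =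
      a + ⟪b, x⟫ + ⟪x, T x⟫ - t * ⟪b + (2 : ℝ) • T x, w⟫ + t ^ 2 * ⟪w, T w⟫ := by
  have hxw : ⟪x, T w⟫ = ⟪T x, w⟫ := (hT x w).symm
  simp only [map_sub, map_smul, inner_sub_left, inner_sub_right, inner_add_left,
    real_inner_smul_left, real_inner_smul_right, hxw, real_inner_comm w (T x),
    real_inner_comm w b]
  ring

/-- Along the steepest-descent line `x - t g`, `g = b + 2 T x`, the objective has derivative
`-‖g‖²` at `t = 0`. -/
theorem IsLocalMin.add_two_smul_eq_zero {T : E →ₗ[ℝ] E} (hT : T.IsSymmetric) {a : ℝ} {b x : E}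
    (hmin : IsLocalMin (fun y => a + ⟪b, y⟫ + ⟪y, T y⟫) x) : b + (2 : ℝ) • T x = 0 := by
  obtain ⟨g, hg⟩ : ∃ g, b + (2 : ℝ) • T x = g := ⟨_, rfl⟩
  have hline : IsLocalMin ((fun y => a + ⟪b, y⟫ + ⟪y, T y⟫) ∘ fun t : ℝ => x - t • g) 0 :=
    IsLocalMin.comp_continuous (by simpa using hmin) (by fun_prop)
  have hφ : ((fun y => a + ⟪b, y⟫ + ⟪y, T y⟫) ∘ fun t : ℝ => x - t • g) =
      fun t => a + ⟪b, x⟫ + ⟪x, T x⟫ - t * ‖g‖ ^ 2 + t ^ 2 * ⟪g, T g⟫ := by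
    funext t
    rw [Function.comp_apply, quadratic_sub_smul hT, hg, real_inner_self_eq_norm_sq]
  have hderiv : HasDerivAt (fun t : ℝ => a + ⟪b, x⟫ + ⟪x, T x⟫ - t * ‖g‖ ^ 2 + t ^ 2 * ⟪g, T g⟫)
      (-‖g‖ ^ 2) 0 := by
    simpa using (((hasDerivAt_id (0 : ℝ)).mul_const (‖g‖ ^ 2)).const_sub
      (a + ⟪b, x⟫ + ⟪x, T x⟫)).fun_add ((hasDerivAt_pow 2 (0 : ℝ)).mul_const ⟪g, T g⟫)
  rw [hφ] at hline
  simpa [hg] using hline.hasDerivAt_eq_zero hderiv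

end QuadraticObjective

section MatrixObjective

variable {ι : Type*} [Fintype ι] [DecidableEq ι] {B : Matrix ι ι ℝ}

theorem Matrix.IsSymm.isSymmetric_toEuclideanLin (hB : B.IsSymm) :
    (toEuclideanLin B).IsSymmetric :=
  isSymmetric_toEuclideanLin_iff.mpr <| by
    rw [IsHermitian, conjTranspose_eq_transpose_of_trivial, hB.eq]

theorem Matrix.isUnit_det_of_forall_inner_mulVec_pos
    (hBpd : ∀ x : EuclideanSpace ℝ ι, x ≠ 0 →
      0 < ⟪x, (WithLp.toLp 2 (B *ᵥ x) : EuclideanSpace ℝ ι)⟫) :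
    IsUnit B.det := by
  refine isUnit_iff_ne_zero.mpr fun hdet => ?_
  obtain ⟨v, hv, hBv⟩ := exists_mulVec_eq_zero_iff.mpr hdet
  have := hBpd (WithLp.toLp 2 v) (by simpa using hv)
  simp [hBv] at this

theorem Matrix.norm_eq_of_add_two_smul_toEuclideanLin_eq_zero (hdet : IsUnit B.det)
    {b x : EuclideanSpace ℝ ι} (h : b + (2 : ℝ) • toEuclideanLin B x = 0) :
    ‖x‖ = ‖((1 : ℝ) / 2) • (WithLp.equiv 2 (ι → ℝ)).symm (B⁻¹ *ᵥ b)‖ := by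
  have hBx : B *ᵥ x.ofLp = -((1 : ℝ) / 2) • b.ofLp := by
    have := congrArg (fun y => ((1 : ℝ) / 2) • y.ofLp) h
    simp only [toLpLin_apply, WithLp.ofLp_add, WithLp.ofLp_smul, smul_add, smul_smul,
      WithLp.ofLp_zero, smul_zero] at this
    norm_num at this
    rw [neg_smul]
    exact eq_neg_of_add_eq_zero_right this
  have hx : x.ofLp = -((1 : ℝ) / 2) • (B⁻¹ *ᵥ b.ofLp) := by
    rw [← mulVec_smul, ← hBx, mulVec_mulVec, nonsing_inv_mul B hdet, one_mulVec]
  rw [← norm_neg]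
  congr 1
  ext i
  simp [hx]

end MatrixObjective

theorem boundary_case_strict_complementary_slackness_general (n : ℕ)
    (B : Matrix (Fin n) (Fin n) ℝ) (hB : B.IsSymm)
    (hBpd : ∀ x : EuclideanSpace ℝ (Fin n), x ≠ 0 →
      0 < ⟪x, (WithLp.toLp 2 (B.mulVec x) : EuclideanSpace ℝ (Fin n))⟫)
    (b₁ : EuclideanSpace ℝ (Fin n)) (β₀ : ℝ) (c : ℝ) (hc : 0 < c)
    (hbd : c < ‖((1 : ℝ)/2) • ((WithLp.equiv 2 (Fin n → ℝ)).symm (B⁻¹.mulVec b₁))‖)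
    (xstar : EuclideanSpace ℝ (Fin n))
    (hxstar : ‖xstar‖ ^ 2 ≤ c ^ 2)
    (hmin : ∀ x ∈ {x : EuclideanSpace ℝ (Fin n) | ‖x‖ ^ 2 ≤ c ^ 2},
      β₀ + ⟪b₁, xstar⟫ + ⟪xstar, (WithLp.toLp 2 (B.mulVec xstar) : EuclideanSpace ℝ (Fin n))⟫ ≤
      β₀ + ⟪b₁, x⟫ + ⟪x, (WithLp.toLp 2 (B.mulVec x) : EuclideanSpace ℝ (Fin n))⟫) :
    ‖xstar‖ ^ 2 = c ^ 2 ∧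
    ∀ lam : ℝ, 0 ≤ lam →
      b₁ + (2 : ℝ) • (WithLp.equiv 2 (Fin n → ℝ)).symm
        ((B + lam • (1 : Matrix (Fin n) (Fin n) ℝ)).mulVec xstar) = 0 →
      0 < lam := by
  have hnot_stationary : b₁ + (2 : ℝ) • toEuclideanLin B xstar ≠ 0 := fun h => by
    have hnorm := norm_eq_of_add_two_smul_toEuclideanLin_eq_zero
      (isUnit_det_of_forall_inner_mulVec_pos hBpd) h
    nlinarith [norm_nonneg xstar]
  refine ⟨hxstar.eq_of_not_lt fun hint => hnot_stationary ?_, fun lam hlam hKKT => ?_⟩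
  · have hball : {x : EuclideanSpace ℝ (Fin n) | ‖x‖ ^ 2 < c ^ 2} ∈ nhds xstar :=
      (isOpen_lt (by fun_prop) continuous_const).mem_nhds hint
    have hloc : IsLocalMin (fun x => β₀ + ⟪b₁, x⟫ + ⟪x, toEuclideanLin B x⟫) xstar :=
      IsMinOn.isLocalMin hmin <|
        Filter.mem_of_superset hball <| Set.ofPred_subset_ofPred.mpr fun _ => le_of_lt
    exact hloc.add_two_smul_eq_zero hB.isSymmetric_toEuclideanLin
  · refine hlam.lt_of_ne fun hlam0 => hnot_stationary ?_
    subst hlam0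
    simpa [toLpLin_apply] using hKKT

/-- boundary case, strict complementary slackness: if `‖(1/2)B⁻¹b₁‖ > c` and
`x*` is the global minimizer of `ŷ` over `𝔛 = {x : ‖x‖² ≤ c²}`, then `‖x*‖² = c²` and any
Lagrange multiplier `λ ≥ 0` with `b₁ + 2(B + λI)x* = 0` satisfies `λ > 0`. -/
theorem boundary_case_strict_complementary_slackness (n : ℕ) (hn : 1 ≤ n)
    (B : Matrix (Fin n) (Fin n) ℝ) (hB : B.IsSymm)
    (hBpd : ∀ x : EuclideanSpace ℝ (Fin n), x ≠ 0 →
      0 < ⟪x, (WithLp.toLp 2 (B.mulVec x) : EuclideanSpace ℝ (Fin n))⟫)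
    (b₁ : EuclideanSpace ℝ (Fin n)) (β₀ : ℝ) (c : ℝ) (hc : 0 < c)
    (hbd : c < ‖((1 : ℝ)/2) • ((WithLp.equiv 2 (Fin n → ℝ)).symm (B⁻¹.mulVec b₁))‖)
    (xstar : EuclideanSpace ℝ (Fin n))
    (hxstar : ‖xstar‖ ^ 2 ≤ c ^ 2)
    (hmin : ∀ x ∈ {x : EuclideanSpace ℝ (Fin n) | ‖x‖ ^ 2 ≤ c ^ 2},
      β₀ + ⟪b₁, xstar⟫ + ⟪xstar, (WithLp.toLp 2 (B.mulVec xstar) : EuclideanSpace ℝ (Fin n))⟫ ≤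
      β₀ + ⟪b₁, x⟫ + ⟪x, (WithLp.toLp 2 (B.mulVec x) : EuclideanSpace ℝ (Fin n))⟫) :
    ‖xstar‖ ^ 2 = c ^ 2 ∧
    ∀ lam : ℝ, 0 ≤ lam →
      b₁ + (2 : ℝ) • (WithLp.equiv 2 (Fin n → ℝ)).symm
        ((B + lam • (1 : Matrix (Fin n) (Fin n) ℝ)).mulVec xstar) = 0 →
      0 < lam :=
  boundary_case_strict_complementary_slackness_general n B hB hBpd b₁ β₀ c hc hbd xstar hxstar hmin
end

section
/- (Explicit solution of the linearized Kuhn–Tucker system.) Let G be a symmetric positive definite n×n real matrix, let x ∈ ℝⁿ be nonzero with column matrix X (n×1), and let M be an n×p real matrix. Set s = XᵀG⁻¹X (an invertible 1×1 matrix since ⟨x, G⁻¹x⟩ > 0). Then there exists a unique pair (D, d), with D an n×p matrix and d a 1×p matrix, satisfying G·D + 2X·d = −M and Xᵀ·D = 0; moreover D = G⁻¹(X·s⁻¹·Xᵀ·G⁻¹ − I)·M and d = −(1/2)·s⁻¹·Xᵀ·G⁻¹·M. -/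
/-!
Solving the first equation for `D = -G⁻¹(M + 2Xd)` turns the constraint `XᵀD = 0` into
`2 s d = -XᵀG⁻¹M`, which determines `d`, and then `D`, because the Schur complement `s = XᵀG⁻¹X`
of the bordered matrix `[G, 2X; Xᵀ, 0]` is invertible. Both `G` and `s` are invertible because the
quadratic form of `G` is positive: a kernel vector `v` of `G` would give `⟪v, Gv⟫ = 0`, and with
`w = G⁻¹x` one has `s = ⟪x, G⁻¹x⟫ = ⟪Gw, w⟫ > 0`.
-/

open scoped RealInnerProductSpace
open Matrix

namespace Matrix

variable {m k p K : Type*} [Fintype m]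

section PositiveForm

variable [DecidableEq m] [Field K] [Preorder K] {G : Matrix m m K}

theorem isUnit_det_of_dotProduct_mulVec_pos (hG : ∀ v ≠ 0, 0 < v ⬝ᵥ G *ᵥ v) : IsUnit G.det := by
  refine isUnit_iff_ne_zero.2 fun hdet => ?_
  obtain ⟨v, hv, hGv⟩ := exists_mulVec_eq_zero_iff.2 hdet
  simpa [hGv] using hG v hv

theorem dotProduct_inv_mulVec_pos (hG : ∀ v ≠ 0, 0 < v ⬝ᵥ G *ᵥ v) {u : m → K} (hu : u ≠ 0) :
    0 < u ⬝ᵥ G⁻¹ *ᵥ u := by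
  have hu' : u = G *ᵥ (G⁻¹ *ᵥ u) := by
    rw [mulVec_mulVec, mul_nonsing_inv _ (isUnit_det_of_dotProduct_mulVec_pos hG), one_mulVec]
  have hw : G⁻¹ *ᵥ u ≠ 0 := fun h => hu (by rw [hu', h, mulVec_zero])
  calc 0 < G⁻¹ *ᵥ u ⬝ᵥ G *ᵥ (G⁻¹ *ᵥ u) := hG _ hw
    _ = u ⬝ᵥ G⁻¹ *ᵥ u := by rw [← hu', dotProduct_comm]

end PositiveForm

theorem replicateCol_transpose_mul_mul_replicateCol_apply [CommSemiring K] (A : Matrix m m K)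
    (u : m → K) (i j : k) : ((replicateCol k u)ᵀ * A * replicateCol k u) i j = u ⬝ᵥ A *ᵥ u := by
  rw [transpose_replicateCol, Matrix.mul_assoc, ← replicateCol_mulVec,
    replicateRow_mul_replicateCol_apply]

theorem bordered_system_iff [DecidableEq m] [Fintype k] [DecidableEq k] [Field K]
    {G : Matrix m m K} {X : Matrix m k K} {Y : Matrix k m K}
    (hG : IsUnit G.det) (hS : IsUnit (Y * G⁻¹ * X).det) {c : K} (hc : c ≠ 0)
    (M D : Matrix m p K) (d : Matrix k p K) :
    G * D + c • (X * d) = -M ∧ Y * D = 0 ↔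
      D = G⁻¹ * (X * (Y * G⁻¹ * X)⁻¹ * Y * G⁻¹ - 1) * M ∧
        d = -c⁻¹ • ((Y * G⁻¹ * X)⁻¹ * Y * G⁻¹ * M) := by
  constructor
  · rintro ⟨h1, h2⟩
    have hD : D = -(G⁻¹ * M) - c • (G⁻¹ * (X * d)) := by
      rw [← Matrix.mul_neg, ← h1, Matrix.mul_add, nonsing_inv_mul_cancel_left G D hG,
        Matrix.mul_smul, add_sub_cancel_right]
    have hSd : c • (Y * G⁻¹ * X * d) = -(Y * G⁻¹ * M) := by
      rw [hD, Matrix.mul_sub, Matrix.mul_neg, Matrix.mul_smul, sub_eq_zero] at h2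
      simpa only [Matrix.mul_assoc] using h2.symm
    have hd : d = -c⁻¹ • ((Y * G⁻¹ * X)⁻¹ * Y * G⁻¹ * M) := calc
      d = (Y * G⁻¹ * X)⁻¹ * (c⁻¹ • c • (Y * G⁻¹ * X * d)) := by
        rw [inv_smul_smul₀ hc, nonsing_inv_mul_cancel_left _ _ hS]
      _ = -c⁻¹ • ((Y * G⁻¹ * X)⁻¹ * Y * G⁻¹ * M) := by
        rw [hSd]
        simp only [Matrix.mul_smul, Matrix.mul_neg, smul_neg, neg_smul, Matrix.mul_assoc]
    refine ⟨?_, hd⟩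
    rw [hD, hd, Matrix.mul_smul, Matrix.mul_smul, smul_smul, mul_neg, mul_inv_cancel₀ hc,
      neg_one_smul]
    simp only [Matrix.mul_sub, Matrix.sub_mul, Matrix.mul_one, Matrix.mul_assoc]
    abel
  · rintro ⟨rfl, rfl⟩
    constructor
    · simp only [Matrix.mul_sub, Matrix.sub_mul, Matrix.mul_one, Matrix.mul_assoc,
        mul_nonsing_inv_cancel_left G _ hG, Matrix.mul_smul, smul_smul, mul_neg,
        mul_inv_cancel₀ hc, neg_one_smul]
      abel
    · have hSS := mul_nonsing_inv_cancel_left _ (Y * G⁻¹ * M) hS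
      simp only [Matrix.mul_sub, Matrix.sub_mul, Matrix.mul_assoc, Matrix.mul_one] at hSS ⊢
      rw [hSS, sub_self]

end Matrix

theorem linearized_kuhnTucker_solution_general (n p : ℕ)
    (G : Matrix (Fin n) (Fin n) ℝ)
    (hGpd : ∀ v : EuclideanSpace ℝ (Fin n), v ≠ 0 →
      0 < ⟪v, (WithLp.toLp 2 (G.mulVec v) : EuclideanSpace ℝ (Fin n))⟫)
    (x : EuclideanSpace ℝ (Fin n)) (hx : x ≠ 0)
    (X : Matrix (Fin n) (Fin 1) ℝ) (hX : X = Matrix.of fun i (_ : Fin 1) => x i)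
    (M : Matrix (Fin n) (Fin p) ℝ) :
    (∃! Dd : Matrix (Fin n) (Fin p) ℝ × Matrix (Fin 1) (Fin p) ℝ,
        G * Dd.1 + (2 : ℝ) • (X * Dd.2) = -M ∧ Xᵀ * Dd.1 = 0) ∧
    ∀ (D : Matrix (Fin n) (Fin p) ℝ) (d : Matrix (Fin 1) (Fin p) ℝ),
      G * D + (2 : ℝ) • (X * d) = -M → Xᵀ * D = 0 →
      D = G⁻¹ * (X * (Xᵀ * G⁻¹ * X)⁻¹ * Xᵀ * G⁻¹ - 1) * M ∧
      d = -((1 : ℝ)/2) • ((Xᵀ * G⁻¹ * X)⁻¹ * Xᵀ * G⁻¹ * M) := by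
  have hpos : ∀ v : Fin n → ℝ, v ≠ 0 → 0 < v ⬝ᵥ G *ᵥ v := fun v hv => by
    simpa [EuclideanSpace.inner_eq_star_dotProduct, dotProduct_comm] using
      hGpd (WithLp.toLp 2 v) (by simpa using hv)
  have hX' : X = replicateCol (Fin 1) x.ofLp := hX
  have hS : IsUnit (Xᵀ * G⁻¹ * X).det := by
    rw [det_fin_one, hX', replicateCol_transpose_mul_mul_replicateCol_apply]
    exact (dotProduct_inv_mulVec_pos hpos (by simpa using hx)).ne'.isUnit
  have hsol := bordered_system_iff (isUnit_det_of_dotProduct_mulVec_pos hpos) hS two_ne_zero M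
  rw [one_div]
  refine ⟨⟨(_, _), (hsol _ _).2 ⟨rfl, rfl⟩, fun Dd hDd => ?_⟩,
    fun D d h1 h2 => (hsol D d).1 ⟨h1, h2⟩⟩
  obtain ⟨hD, hd⟩ := (hsol Dd.1 Dd.2).1 hDd
  exact Prod.ext hD hd

/-- explicit solution of the linearized Kuhn–Tucker system: with `G` symmetric
positive definite, `x ≠ 0` with column matrix `X`, `s = XᵀG⁻¹X`, the system
`G·D + 2X·d = −M`, `Xᵀ·D = 0` has a unique solution `(D, d)`, given by
`D = G⁻¹(X·s⁻¹·Xᵀ·G⁻¹ − I)·M` and `d = −(1/2)·s⁻¹·Xᵀ·G⁻¹·M`. -/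
theorem linearized_kuhnTucker_solution (n p : ℕ) (hn : 1 ≤ n)
    (G : Matrix (Fin n) (Fin n) ℝ) (hG : G.IsSymm)
    (hGpd : ∀ v : EuclideanSpace ℝ (Fin n), v ≠ 0 →
      0 < ⟪v, (WithLp.toLp 2 (G.mulVec v) : EuclideanSpace ℝ (Fin n))⟫)
    (x : EuclideanSpace ℝ (Fin n)) (hx : x ≠ 0)
    (X : Matrix (Fin n) (Fin 1) ℝ) (hX : X = Matrix.of fun i (_ : Fin 1) => x i)
    (M : Matrix (Fin n) (Fin p) ℝ) :
    (∃! Dd : Matrix (Fin n) (Fin p) ℝ × Matrix (Fin 1) (Fin p) ℝ,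
        G * Dd.1 + (2 : ℝ) • (X * Dd.2) = -M ∧ Xᵀ * Dd.1 = 0) ∧
    ∀ (D : Matrix (Fin n) (Fin p) ℝ) (d : Matrix (Fin 1) (Fin p) ℝ),
      G * D + (2 : ℝ) • (X * d) = -M → Xᵀ * D = 0 →
      D = G⁻¹ * (X * (Xᵀ * G⁻¹ * X)⁻¹ * Xᵀ * G⁻¹ - 1) * M ∧
      d = -((1 : ℝ)/2) • ((Xᵀ * G⁻¹ * X)⁻¹ * Xᵀ * G⁻¹ * M) :=
  linearized_kuhnTucker_solution_general n p G hGpd x hx X hX M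
end

section
/- (Differentiable dependence of the Kuhn–Tucker point on the regression coefficients; boundary case.) Let n ≥ 1 and c > 0. Suppose B⁰ is a symmetric n×n real matrix, b₁⁰ ∈ ℝⁿ, λ₀ > 0 and x₀ ∈ ℝⁿ satisfy: ‖x₀‖² = c², b₁⁰ + 2(B⁰ + λ₀I)x₀ = 0, and B⁰ + λ₀I is positive definite. Then there exist an open neighborhood U of (b₁⁰, B⁰) in ℝⁿ × (n×n real matrices) and continuously differentiable functions x : U → ℝⁿ and λ : U → ℝ with x(b₁⁰, B⁰) = x₀ and λ(b₁⁰, B⁰) = λ₀, such that for every (b₁, B) ∈ U: b₁ + 2(B + λ(b₁, B)I)·x(b₁, B) = 0, ‖x(b₁, B)‖² = c², and λ(b₁, B) > 0 (so the status of the constraint is unchanged in the neighborhood). -/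
/-!
Implicit function theorem applied to `F((b, A), (x, λ)) = (b + 2 (A + λ) x, ‖x‖² - c²)`. Its
derivative in `(x, λ)` is `(w, μ) ↦ (2 ((A + λ) w + μ x), 2 ⟪x, w⟫)`. If this vanishes, pairing
the first component with `w` kills `μ ⟪w, x⟫`, so `⟪w, (A + λ) w⟫ = 0` and positive definiteness
gives `w = 0`; then `μ x = 0` with `x ≠ 0` (as `‖x‖ = c > 0`). In finite dimension this derivative
is therefore invertible, and the resulting implicit function is `C¹`; `λ > 0` persists near the
base point by continuity.
-/

open scoped RealInnerProductSpace
open Matrix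

attribute [local instance] Matrix.normedAddCommGroup Matrix.normedSpace

open scoped Topology
open ContinuousLinearMap

theorem ContinuousLinearMap.isInvertible_of_injective {𝕜 V : Type*} [NontriviallyNormedField 𝕜]
    [CompleteSpace 𝕜] [NormedAddCommGroup V] [NormedSpace 𝕜 V] [FiniteDimensional 𝕜 V]
    {f : V →L[𝕜] V} (hf : Function.Injective f) : f.IsInvertible :=
  ⟨(LinearEquiv.ofInjectiveEndo f.toLinearMap hf).toContinuousLinearEquiv, rfl⟩

theorem fderiv_comp_inr_eq {𝕜 E₁ E₂ F : Type*} [NontriviallyNormedField 𝕜]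
    [NormedAddCommGroup E₁] [NormedSpace 𝕜 E₁] [NormedAddCommGroup E₂] [NormedSpace 𝕜 E₂]
    [NormedAddCommGroup F] [NormedSpace 𝕜 F] {f : E₁ × E₂ → F} {u : E₁ × E₂}
    {f₂' : E₂ →L[𝕜] F} (hf : DifferentiableAt 𝕜 f u)
    (hf₂ : HasFDerivAt (fun y => f (u.1, y)) f₂' u.2) :
    fderiv 𝕜 f u ∘L inr 𝕜 E₁ E₂ = f₂' :=
  (hf.hasFDerivAt.comp u.2 (hasFDerivAt_prodMk_right u.1 u.2)).unique hf₂

theorem ContDiffAt.exists_eventually_contDiffAt_implicit {𝕜 E₁ E₂ F : Type*} [RCLike 𝕜]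
    [NormedAddCommGroup E₁] [NormedSpace 𝕜 E₁] [CompleteSpace E₁]
    [NormedAddCommGroup E₂] [NormedSpace 𝕜 E₂] [CompleteSpace E₂]
    [NormedAddCommGroup F] [NormedSpace 𝕜 F] [CompleteSpace F] {f : E₁ × E₂ → F} {u : E₁ × E₂}
    (hf : ContDiffAt 𝕜 1 f u) (hf₂ : (fderiv 𝕜 f u ∘L inr 𝕜 E₁ E₂).IsInvertible) :
    ∃ ψ : E₁ → E₂, ψ u.1 = u.2 ∧ ∀ᶠ p in 𝓝 u.1, ContDiffAt 𝕜 1 ψ p ∧ f (p, ψ p) = f u :=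
  ⟨hf.implicitFunction one_ne_zero hf₂, hf.implicitFunction_apply_self one_ne_zero hf₂,
    ((hf.contDiffAt_implicitFunction one_ne_zero hf₂).eventually (by simp)).and
      (hf.eventually_apply_implicitFunction one_ne_zero hf₂)⟩

theorem Matrix.toLp_add_smul_one_mulVec {𝕜 ι : Type*} [RCLike 𝕜] [Fintype ι] [DecidableEq ι]
    (B : Matrix ι ι 𝕜) (l : 𝕜) (x : EuclideanSpace 𝕜 ι) :
    WithLp.toLp 2 ((B + l • 1) *ᵥ x) = toEuclideanCLM (𝕜 := 𝕜) B x + l • x := by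
  ext i
  simp [add_mulVec, smul_mulVec]

namespace KuhnTucker

variable {E : Type*} [NormedAddCommGroup E] [InnerProductSpace ℝ E]

-- For self-adjoint `A`, the zeros are the critical points `(x, λ)` of the Lagrangian
-- `⟪b, x⟫ + ⟪x, A x⟫ + λ (‖x‖² - c²)`.
noncomputable def residual (c : ℝ) (p : E × (E →L[ℝ] E)) (y : E × ℝ) : E × ℝ :=
  (p.1 + (2 : ℝ) • (p.2 y.1 + y.2 • y.1), ‖y.1‖ ^ 2 - c ^ 2)

-- For self-adjoint `A`, the zeros are the critical points `(x, λ)` of the Lagrangian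
-- `⟪b, x⟫ + ⟪x, A x⟫ + λ (‖x‖² - c²)`.
noncomputable def residualDeriv (A : E →L[ℝ] E) (y : E × ℝ) : E × ℝ →L[ℝ] E × ℝ :=
  ((2 : ℝ) • ((A + y.2 • (1 : E →L[ℝ] E)) ∘L fst ℝ E ℝ + (snd ℝ E ℝ).smulRight y.1)).prod
    ((2 : ℝ) • innerSL ℝ y.1 ∘L fst ℝ E ℝ)

theorem contDiff_residual (c : ℝ) {n : WithTop ℕ∞} :
    ContDiff ℝ n (Function.uncurry (residual (E := E) c)) := by
  have hx : ContDiff ℝ n fun q : (E × (E →L[ℝ] E)) × (E × ℝ) => q.2.1 := by fun_prop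
  refine ContDiff.prodMk ?_ ((contDiff_norm_sq ℝ).comp hx |>.sub contDiff_const)
  refine contDiff_fst.fst.add (ContDiff.const_smul _ ?_)
  exact (contDiff_fst.snd.clm_apply hx).add (contDiff_snd.snd.smul hx)

theorem hasFDerivAt_residual (c : ℝ) (p : E × (E →L[ℝ] E)) (y : E × ℝ) :
    HasFDerivAt (residual c p) (residualDeriv p.2 y) y := by
  have hfst := hasFDerivAt_fst (𝕜 := ℝ) (p := y)
  have h := ((hasFDerivAt_const p.1 y).add
    (((p.2.hasFDerivAt.comp y hfst).add (hasFDerivAt_snd.smul hfst)).const_smul (2 : ℝ))).prodMk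
    (hfst.norm_sq.sub_const (c ^ 2))
  exact h.congr_fderiv (by ext <;> simp [residualDeriv])

theorem residualDeriv_injective {A : E →L[ℝ] E} {x : E} {lam : ℝ} (hx : x ≠ 0)
    (hpd : ∀ v ≠ 0, 0 < ⟪v, A v + lam • v⟫) : Function.Injective (residualDeriv A (x, lam)) := by
  refine (injective_iff_map_eq_zero _).2 fun ⟨w, μ⟩ h => ?_
  obtain ⟨hstat, horth⟩ : A w + lam • w + μ • x = 0 ∧ ⟪x, w⟫ = 0 := by
    simpa [residualDeriv, ← smul_add] using h
  obtain rfl : w = 0 := by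
    by_contra hw
    have hzero : ⟪w, A w + lam • w⟫ = 0 := by
      simpa [inner_add_right, real_inner_smul_right, real_inner_comm, horth]
        using congrArg (⟪w, ·⟫) hstat
    exact (hpd w hw).ne' hzero
  obtain rfl : μ = 0 := by simpa [hx] using hstat
  rfl

variable [FiniteDimensional ℝ E]

theorem exists_contDiffOn_residual_eq_zero {c : ℝ} (hc : c ≠ 0) {b₀ : E} {A₀ : E →L[ℝ] E} {x₀ : E}
    {lam₀ : ℝ} (hlam₀ : 0 < lam₀) (hx₀ : ‖x₀‖ ^ 2 = c ^ 2)
    (hkt : b₀ + (2 : ℝ) • (A₀ x₀ + lam₀ • x₀) = 0) (hpd : ∀ v ≠ 0, 0 < ⟪v, A₀ v + lam₀ • v⟫) :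
    ∃ U, IsOpen U ∧ (b₀, A₀) ∈ U ∧ ∃ ψ : E × (E →L[ℝ] E) → E × ℝ,
      ContDiffOn ℝ 1 ψ U ∧ ψ (b₀, A₀) = (x₀, lam₀) ∧
      ∀ p ∈ U, residual c p (ψ p) = 0 ∧ 0 < (ψ p).2 := by
  set u : (E × (E →L[ℝ] E)) × (E × ℝ) := ((b₀, A₀), (x₀, lam₀))
  have hx₀ne : x₀ ≠ 0 := by
    rintro rfl
    exact pow_ne_zero 2 hc (by simpa using hx₀.symm)
  have hu : Function.uncurry (residual c) u = 0 := by
    simp only [u, Function.uncurry_apply_pair, residual, hkt, hx₀, sub_self, Prod.mk_zero_zero]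
  have hinv : (fderiv ℝ (Function.uncurry (residual c)) u ∘L inr ℝ _ _).IsInvertible := by
    rw [fderiv_comp_inr_eq ((contDiff_residual c).differentiable one_ne_zero u)
      (hasFDerivAt_residual c _ _)]
    exact isInvertible_of_injective (residualDeriv_injective hx₀ne hpd)
  obtain ⟨ψ, hψu, hψ⟩ :=
    (contDiff_residual c).contDiffAt.exists_eventually_contDiffAt_implicit hinv
  have hpos : ∀ᶠ p in 𝓝 (b₀, A₀), 0 < (ψ p).2 :=
    hψ.self_of_nhds.1.continuousAt.snd.eventually_const_lt (by simpa [hψu] using hlam₀)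
  obtain ⟨U, hU, hUo, hpU⟩ := eventually_nhds_iff.1 (hψ.and hpos)
  refine ⟨U, hUo, hpU, ψ, fun p hp => (hU p hp).1.1.contDiffWithinAt, hψu, fun p hp => ?_⟩
  exact ⟨(hU p hp).1.2.trans hu, (hU p hp).2⟩

end KuhnTucker

theorem kuhnTucker_point_contDiff_dependence_general (n : ℕ) (c : ℝ) (hc : 0 < c)
    (B₀ : Matrix (Fin n) (Fin n) ℝ)
    (b₀ : EuclideanSpace ℝ (Fin n)) (lam₀ : ℝ) (hlam₀ : 0 < lam₀)
    (x₀ : EuclideanSpace ℝ (Fin n)) (hx₀ : ‖x₀‖ ^ 2 = c ^ 2)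
    (hkt : b₀ + (2 : ℝ) • (WithLp.equiv 2 (Fin n → ℝ)).symm
      ((B₀ + lam₀ • (1 : Matrix (Fin n) (Fin n) ℝ)).mulVec x₀) = 0)
    (hpd : ∀ v : EuclideanSpace ℝ (Fin n), v ≠ 0 →
      0 < ⟪v, (WithLp.toLp 2 ((B₀ + lam₀ • (1 : Matrix (Fin n) (Fin n) ℝ)).mulVec v) :
        EuclideanSpace ℝ (Fin n))⟫) :
    ∃ U : Set (EuclideanSpace ℝ (Fin n) × Matrix (Fin n) (Fin n) ℝ),
      IsOpen U ∧ (b₀, B₀) ∈ U ∧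
      ∃ x : EuclideanSpace ℝ (Fin n) × Matrix (Fin n) (Fin n) ℝ → EuclideanSpace ℝ (Fin n),
      ∃ lam : EuclideanSpace ℝ (Fin n) × Matrix (Fin n) (Fin n) ℝ → ℝ,
        ContDiffOn ℝ 1 x U ∧ ContDiffOn ℝ 1 lam U ∧
        x (b₀, B₀) = x₀ ∧ lam (b₀, B₀) = lam₀ ∧
        ∀ q ∈ U,
          q.1 + (2 : ℝ) • (WithLp.equiv 2 (Fin n → ℝ)).symm
            ((q.2 + lam q • (1 : Matrix (Fin n) (Fin n) ℝ)).mulVec (x q)) = 0 ∧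
          ‖x q‖ ^ 2 = c ^ 2 ∧ 0 < lam q := by
  simp only [WithLp.equiv_symm_apply, toLp_add_smul_one_mulVec] at hkt hpd ⊢
  obtain ⟨U, hUo, hU₀, ψ, hψ, hψ₀, hψU⟩ :=
    KuhnTucker.exists_contDiffOn_residual_eq_zero hc.ne' hlam₀ hx₀ hkt hpd
  let Φ : EuclideanSpace ℝ (Fin n) × Matrix (Fin n) (Fin n) ℝ →L[ℝ]
      EuclideanSpace ℝ (Fin n) × (EuclideanSpace ℝ (Fin n) →L[ℝ] EuclideanSpace ℝ (Fin n)) :=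
    (ContinuousLinearMap.id ℝ _).prodMap
      (LinearMap.toContinuousLinearMap (toEuclideanCLM (𝕜 := ℝ)).toAlgEquiv.toLinearMap)
  have hψΦ := hψ.comp_continuousLinearMap Φ
  refine ⟨Φ ⁻¹' U, hUo.preimage Φ.continuous, hU₀, fun q => (ψ (Φ q)).1, fun q => (ψ (Φ q)).2,
    hψΦ.fst, hψΦ.snd, congrArg Prod.fst hψ₀, congrArg Prod.snd hψ₀, fun q hq => ?_⟩
  obtain ⟨hres, hpos⟩ := hψU _ hq
  simp only [KuhnTucker.residual, Prod.mk_eq_zero, sub_eq_zero] at hres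
  exact ⟨hres.1, hres.2, hpos⟩

/-- differentiable dependence of the boundary Kuhn–Tucker point on the
regression coefficients: if `(x₀, lam₀)` is a boundary Kuhn–Tucker point for the coefficients
`(b₁⁰, B⁰)` with `lam₀ > 0` and `B⁰ + lam₀I` positive definite, then on a neighborhood `U` of
`(b₁⁰, B⁰)` there are `C¹` functions `x(·), λ(·)` through `(x₀, lam₀)` satisfying the
Kuhn–Tucker equations with active constraint and positive multiplier throughout `U`. -/
theorem kuhnTucker_point_contDiff_dependence (n : ℕ) (hn : 1 ≤ n) (c : ℝ) (hc : 0 < c)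
    (B₀ : Matrix (Fin n) (Fin n) ℝ) (hB₀ : B₀.IsSymm)
    (b₀ : EuclideanSpace ℝ (Fin n)) (lam₀ : ℝ) (hlam₀ : 0 < lam₀)
    (x₀ : EuclideanSpace ℝ (Fin n)) (hx₀ : ‖x₀‖ ^ 2 = c ^ 2)
    (hkt : b₀ + (2 : ℝ) • (WithLp.equiv 2 (Fin n → ℝ)).symm
      ((B₀ + lam₀ • (1 : Matrix (Fin n) (Fin n) ℝ)).mulVec x₀) = 0)
    (hpd : ∀ v : EuclideanSpace ℝ (Fin n), v ≠ 0 →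
      0 < ⟪v, (WithLp.toLp 2 ((B₀ + lam₀ • (1 : Matrix (Fin n) (Fin n) ℝ)).mulVec v) :
        EuclideanSpace ℝ (Fin n))⟫) :
    ∃ U : Set (EuclideanSpace ℝ (Fin n) × Matrix (Fin n) (Fin n) ℝ),
      IsOpen U ∧ (b₀, B₀) ∈ U ∧
      ∃ x : EuclideanSpace ℝ (Fin n) × Matrix (Fin n) (Fin n) ℝ → EuclideanSpace ℝ (Fin n),
      ∃ lam : EuclideanSpace ℝ (Fin n) × Matrix (Fin n) (Fin n) ℝ → ℝ,
        ContDiffOn ℝ 1 x U ∧ ContDiffOn ℝ 1 lam U ∧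
        x (b₀, B₀) = x₀ ∧ lam (b₀, B₀) = lam₀ ∧
        ∀ q ∈ U,
          q.1 + (2 : ℝ) • (WithLp.equiv 2 (Fin n → ℝ)).symm
            ((q.2 + lam q • (1 : Matrix (Fin n) (Fin n) ℝ)).mulVec (x q)) = 0 ∧
          ‖x q‖ ^ 2 = c ^ 2 ∧ 0 < lam q :=
  kuhnTucker_point_contDiff_dependence_general n c hc B₀ b₀ lam₀ hlam₀ x₀ hx₀ hkt hpd
end

section
/- (Continuity of the optimal point in the regression coefficients.) Let n ≥ 1 and c > 0. For each pair (b₁, B) with B a symmetric positive definite n×n real matrix and b₁ ∈ ℝⁿ, let x*(b₁, B) denote the unique global minimizer of ŷ(x) = b₁ᵀx + xᵀBx over the closed ball 𝔛 = {x ∈ ℝⁿ : ‖x‖² ≤ c²}. Then the map (b₁, B) ↦ x*(b₁, B) is continuous on the set {(b₁, B) : B symmetric positive definite}. -/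
/-!
The objective `ŷ(x) = ⟪b₁, x⟫ + ⟪x, B x⟫` is jointly continuous in `((b₁, B), x)` and, for positive
definite `B`, strictly convex in `x`, so it has a unique minimizer on the ball. As `(b₁', B')`
tends to `(b₁, B)`, the minimizers `x*(b₁', B')` stay in the compact ball and each of their
cluster points is, by continuity, again a minimizer for `(b₁, B)`; uniqueness leaves only
`x*(b₁, B)`.
-/

open scoped RealInnerProductSpace
open Matrix Filter Topology

section Argmin

variable {P X : Type*} [TopologicalSpace P] [TopologicalSpace X]

theorem isMinOn_of_mapClusterPt {β : Type*} [Preorder β] [TopologicalSpace β]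
    [OrderClosedTopology β] {f : P → X → β} (hf : Continuous (Function.uncurry f))
    {K : Set X} {l : Filter P} {p₀ : P} (hl : l ≤ 𝓝 p₀) {g : P → X}
    (hg : ∀ᶠ p in l, IsMinOn (f p) K (g p)) {y : X} (hy : MapClusterPt y l g) :
    IsMinOn (f p₀) K y := by
  obtain ⟨U, hUl, hgU⟩ := mapClusterPt_iff_ultrafilter.mp hy
  intro x hx
  have hgraph : Tendsto (fun p => (p, g p)) U (𝓝 (p₀, y)) :=
    ((tendsto_id.mono_left hUl).mono_right hl).prodMk_nhds hgU
  have hclosed : IsClosed {z : P × X | f z.1 z.2 ≤ f z.1 x} :=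
    isClosed_le hf (hf.comp (continuous_fst.prodMk continuous_const))
  exact hclosed.mem_of_tendsto hgraph ((hg.filter_mono hUl).mono fun p hp => hp hx)

/-- Berge's maximum theorem for a fixed compact constraint set and a unique minimizer. -/
theorem continuousOn_of_isMinOn_of_unique {β : Type*} [Preorder β] [TopologicalSpace β]
    [OrderClosedTopology β] {f : P → X → β} (hf : Continuous (Function.uncurry f))
    {K : Set X} (hK : IsCompact K) {S : Set P} {g : P → X}
    (hgK : ∀ p ∈ S, g p ∈ K) (hg : ∀ p ∈ S, IsMinOn (f p) K (g p))
    (huniq : ∀ p ∈ S, ∀ x ∈ K, IsMinOn (f p) K x → x = g p) :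
    ContinuousOn g S := by
  intro p₀ hp₀
  refine hK.tendsto_nhds_of_unique_mapClusterPt
    (eventually_nhdsWithin_of_forall hgK) fun y hyK hy => huniq p₀ hp₀ y hyK ?_
  exact isMinOn_of_mapClusterPt hf nhdsWithin_le_nhds (eventually_nhdsWithin_of_forall hg) hy

theorem continuousOn_of_isMinOn_of_strictConvexOn {𝕜 β : Type*} [Field 𝕜] [LinearOrder 𝕜]
    [IsStrictOrderedRing 𝕜] [AddCommMonoid X] [SMul 𝕜 X] [AddCommMonoid β] [PartialOrder β]
    [IsOrderedAddMonoid β] [Module 𝕜 β] [PosSMulMono 𝕜 β] [TopologicalSpace β]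
    [OrderClosedTopology β] {f : P → X → β} (hf : Continuous (Function.uncurry f))
    {K : Set X} (hK : IsCompact K) {S : Set P} {g : P → X}
    (hgK : ∀ p ∈ S, g p ∈ K) (hg : ∀ p ∈ S, IsMinOn (f p) K (g p))
    (hconv : ∀ p ∈ S, StrictConvexOn 𝕜 K (f p)) :
    ContinuousOn g S :=
  continuousOn_of_isMinOn_of_unique hf hK hgK hg fun p hp _ hx hxmin =>
    (hconv p hp).eq_of_isMinOn hxmin (hg p hp) hx (hgK p hp)

end Argmin

section Quadratic

variable {E : Type*} [NormedAddCommGroup E] [InnerProductSpace ℝ E]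

theorem strictConvexOn_inner_add_inner_map_self {T : E →ₗ[ℝ] E}
    (hT : ∀ v, v ≠ 0 → 0 < ⟪v, T v⟫) (b : E) {s : Set E} (hs : Convex ℝ s) :
    StrictConvexOn ℝ s fun x => ⟪b, x⟫ + ⟪x, T x⟫ := by
  refine ⟨hs, fun x _ y _ hxy a c ha hc hac => ?_⟩
  have hdefect : a * (⟪b, x⟫ + ⟪x, T x⟫) + c * (⟪b, y⟫ + ⟪y, T y⟫)
      - (⟪b, a • x + c • y⟫ + ⟪a • x + c • y, T (a • x + c • y)⟫)
      = a * c * ⟪x - y, T (x - y)⟫ := by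
    simp only [map_add, map_sub, map_smul, inner_add_left, inner_add_right, inner_sub_left,
      inner_sub_right, real_inner_smul_left, real_inner_smul_right]
    linear_combination (-(a * ⟪x, T x⟫) - c * ⟪y, T y⟫) * hac
  have hpos : 0 < a * c * ⟪x - y, T (x - y)⟫ :=
    mul_pos (mul_pos ha hc) (hT _ (sub_ne_zero.mpr hxy))
  simp only [smul_eq_mul]
  linarith

end Quadratic

theorem optimal_point_continuousOn_general (n : ℕ) (c : ℝ)
    (xstar : EuclideanSpace ℝ (Fin n) × Matrix (Fin n) (Fin n) ℝ → EuclideanSpace ℝ (Fin n))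
    (hxstar : ∀ q : EuclideanSpace ℝ (Fin n) × Matrix (Fin n) (Fin n) ℝ,
      q.2.IsSymm →
      (∀ v : EuclideanSpace ℝ (Fin n), v ≠ 0 →
        0 < ⟪v, (WithLp.toLp 2 (q.2.mulVec v) : EuclideanSpace ℝ (Fin n))⟫) →
      ‖xstar q‖ ^ 2 ≤ c ^ 2 ∧
      ∀ x : EuclideanSpace ℝ (Fin n), ‖x‖ ^ 2 ≤ c ^ 2 →
        ⟪q.1, xstar q⟫ + ⟪xstar q, (WithLp.toLp 2 (q.2.mulVec (xstar q)) : EuclideanSpace ℝ (Fin n))⟫ ≤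
        ⟪q.1, x⟫ + ⟪x, (WithLp.toLp 2 (q.2.mulVec x) : EuclideanSpace ℝ (Fin n))⟫) :
    ContinuousOn xstar
      {q : EuclideanSpace ℝ (Fin n) × Matrix (Fin n) (Fin n) ℝ |
        q.2.IsSymm ∧ ∀ v : EuclideanSpace ℝ (Fin n), v ≠ 0 →
          0 < ⟪v, (WithLp.toLp 2 (q.2.mulVec v) : EuclideanSpace ℝ (Fin n))⟫} := by
  have hball (x : EuclideanSpace ℝ (Fin n)) : ‖x‖ ^ 2 ≤ c ^ 2 ↔ x ∈ Metric.closedBall 0 |c| := by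
    rw [sq_le_sq, abs_norm, mem_closedBall_zero_iff]
  refine continuousOn_of_isMinOn_of_strictConvexOn (𝕜 := ℝ)
    (f := fun q x => ⟪q.1, x⟫ + ⟪x, (WithLp.toLp 2 (q.2.mulVec x) : EuclideanSpace ℝ (Fin n))⟫)
    (by fun_prop) (isCompact_closedBall 0 |c|)
    (fun q hq => (hball _).mp (hxstar q hq.1 hq.2).1)
    (fun q hq => isMinOn_iff.mpr fun x hx => (hxstar q hq.1 hq.2).2 x ((hball x).mpr hx))
    fun q hq => strictConvexOn_inner_add_inner_map_self (T := toLpLin 2 2 q.2) hq.2 q.1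
      (convex_closedBall 0 |c|)

/-- continuity of the optimal point in the regression coefficients: if
`xstar (b₁, B)` selects, for every symmetric positive definite `B`, the (unique) global
minimizer of `ŷ(x) = b₁ᵀx + xᵀBx` over the closed ball `𝔛 = {x : ‖x‖² ≤ c²}`, then
`xstar` is continuous on the set of pairs `(b₁, B)` with `B` symmetric positive definite. -/
theorem optimal_point_continuousOn (n : ℕ) (hn : 1 ≤ n) (c : ℝ) (hc : 0 < c)
    (xstar : EuclideanSpace ℝ (Fin n) × Matrix (Fin n) (Fin n) ℝ → EuclideanSpace ℝ (Fin n))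
    (hxstar : ∀ q : EuclideanSpace ℝ (Fin n) × Matrix (Fin n) (Fin n) ℝ,
      q.2.IsSymm →
      (∀ v : EuclideanSpace ℝ (Fin n), v ≠ 0 →
        0 < ⟪v, (WithLp.toLp 2 (q.2.mulVec v) : EuclideanSpace ℝ (Fin n))⟫) →
      ‖xstar q‖ ^ 2 ≤ c ^ 2 ∧
      ∀ x : EuclideanSpace ℝ (Fin n), ‖x‖ ^ 2 ≤ c ^ 2 →
        ⟪q.1, xstar q⟫ + ⟪xstar q, (WithLp.toLp 2 (q.2.mulVec (xstar q)) : EuclideanSpace ℝ (Fin n))⟫ ≤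
        ⟪q.1, x⟫ + ⟪x, (WithLp.toLp 2 (q.2.mulVec x) : EuclideanSpace ℝ (Fin n))⟫) :
    ContinuousOn xstar
      {q : EuclideanSpace ℝ (Fin n) × Matrix (Fin n) (Fin n) ℝ |
        q.2.IsSymm ∧ ∀ v : EuclideanSpace ℝ (Fin n), v ≠ 0 →
          0 < ⟪v, (WithLp.toLp 2 (q.2.mulVec v) : EuclideanSpace ℝ (Fin n))⟫} :=
  optimal_point_continuousOn_general n c xstar hxstar
end
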